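/- arXiv:1303.2412 — 7 statements merged into one kernel-verified Lean document; each statement's English description precedes it below -/
import Mathlib

section
/- Let n ≥ 2 be an integer and let f : [0,1] → ℝ be continuous and differentiable with derivative f′ of finite total variation Var(f′) on [0,1]. With nodes x_i = (i−1)/(n−1) for i = 1,…,n, let T_n(f) = (1/(2(n−1)))[f(x_1) + 2f(x_2) + ⋯ + 2f(x_{n−1}) + f(x_n)] be the composite trapezoidal rule. Then |∫₀¹ f(x) dx − T_n(f)| ≤ Var(f′)/(8(n−1)²). -/
/-!
On a single panel `[a, b]` with midpoint `m`, integrating `(x - m) f x` by parts gives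
`∫ f - (b - a)(f a + f b)/2 = ∫ (m - x)(f' x - f' m) dx`. On each half-panel
`|f' x - f' m|` is bounded by the variation of `f'` over that half, and `∫ |m - x|` over
either half is `(b - a)² / 8`; since variation is additive over adjacent intervals, the
panel error is at most `(b - a)² / 8 · Var_{[a,b]} f'`. Summing over the `n - 1` panels of
width `1 / (n - 1)` and adding up the variations gives the bound.
-/

open MeasureTheory Set intervalIntegral

theorem BoundedVariationOn.intervalIntegrable {g : ℝ → ℝ} {a b : ℝ}
    (hg : BoundedVariationOn g (uIcc a b)) : IntervalIntegrable g volume a b := by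
  obtain ⟨p, q, hp, hq, rfl⟩ := hg.locallyBoundedVariationOn.exists_monotoneOn_sub_monotoneOn
  exact hp.intervalIntegrable.sub hq.intervalIntegrable

theorem integral_sub_trapezoid_eq_integral_mul_sub {f f' : ℝ → ℝ} {a b : ℝ} (hab : a ≤ b)
    (hf : ContinuousOn f (Icc a b)) (hderiv : ∀ x ∈ Ioo a b, HasDerivAt f (f' x) x)
    (hf' : IntervalIntegrable f' volume a b) (c : ℝ) :
    (∫ x in a..b, f x) - (b - a) * (f a + f b) / 2 =
      ∫ x in a..b, ((a + b) / 2 - x) * (f' x - c) := by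
  set m := (a + b) / 2
  have hfi : IntervalIntegrable f volume a b := (hf.mono (uIcc_of_le hab).subset).intervalIntegrable
  have hki : IntervalIntegrable (fun x => (m - x) * (f' x - c)) volume a b :=
    (hf'.sub intervalIntegrable_const).continuousOn_mul (by fun_prop)
  -- `(x - m) f x - c (x - m)² / 2` is an antiderivative of `f x - (m - x) (f' x - c)`
  have hFTC : ∫ x in a..b, (f x - (m - x) * (f' x - c)) = (b - a) * (f a + f b) / 2 := by
    rw [integral_eq_sub_of_hasDerivAt_of_le hab (f := fun x => (x - m) * f x - c * (x - m) ^ 2 / 2)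
      (by fun_prop) (fun x hx => ?_) (hfi.sub hki)]
    · simp only [m]; ring
    · have h1 := ((hasDerivAt_id' x).sub_const m).mul (hderiv x hx)
      have h2 := ((((hasDerivAt_id' x).sub_const m).pow 2).const_mul c).div_const 2
      exact (h1.sub h2).congr_deriv (by push_cast; ring)
  rw [← hFTC, integral_sub hfi hki]
  ring

theorem abs_integral_mul_sub_le {g k : ℝ → ℝ} {u v p : ℝ} (huv : u ≤ v)
    (hg : BoundedVariationOn g (Icc u v)) (hp : p ∈ Icc u v) (hk : ContinuousOn k (Icc u v)) :
    |∫ x in u..v, k x * (g x - g p)|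
      ≤ (∫ x in u..v, |k x|) * (eVariationOn g (Icc u v)).toReal := by
  have hint : IntervalIntegrable (fun x => k x * (g x - g p)) volume u v :=
    ((uIcc_of_le huv ▸ hg).intervalIntegrable.sub intervalIntegrable_const).continuousOn_mul
      (uIcc_of_le huv ▸ hk)
  calc |∫ x in u..v, k x * (g x - g p)|
      ≤ ∫ x in u..v, |k x * (g x - g p)| := abs_integral_le_integral_abs huv
    _ ≤ ∫ x in u..v, |k x| * (eVariationOn g (Icc u v)).toReal := by
        refine integral_mono_on huv hint.abs (hk.abs.intervalIntegrable_of_Icc huv |>.mul_const _)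
          fun x hx => ?_
        rw [abs_mul, ← Real.dist_eq]
        exact mul_le_mul_of_nonneg_left (hg.dist_le hx hp) (abs_nonneg _)
    _ = (∫ x in u..v, |k x|) * (eVariationOn g (Icc u v)).toReal := integral_mul_const _ _

theorem abs_integral_sub_trapezoid_le {f f' : ℝ → ℝ} {a b : ℝ} (hab : a ≤ b)
    (hf : ContinuousOn f (Icc a b)) (hderiv : ∀ x ∈ Ioo a b, HasDerivAt f (f' x) x)
    (hbv : BoundedVariationOn f' (Icc a b)) :
    |(∫ x in a..b, f x) - (b - a) * (f a + f b) / 2|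
      ≤ (b - a) ^ 2 / 8 * (eVariationOn f' (Icc a b)).toReal := by
  set m := (a + b) / 2 with hm
  have ham : a ≤ m := by linarith
  have hmb : m ≤ b := by linarith
  have hbv₁ : BoundedVariationOn f' (Icc a m) := hbv.mono (Icc_subset_Icc_right hmb)
  have hbv₂ : BoundedVariationOn f' (Icc m b) := hbv.mono (Icc_subset_Icc_left ham)
  have hint : ∀ {u v}, a ≤ u → u ≤ v → v ≤ b →
      IntervalIntegrable (fun x => (m - x) * (f' x - f' m)) volume u v := fun hu huv hv =>
    ((hbv.mono (uIcc_of_le huv ▸ Icc_subset_Icc hu hv)).intervalIntegrable.sub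
      intervalIntegrable_const).continuousOn_mul (by fun_prop)
  have hkernel₁ : ∫ x in a..m, |m - x| = (b - a) ^ 2 / 8 := by
    rw [integral_congr (g := fun x => m - x) fun x hx => abs_of_nonneg ?_]
    · rw [intervalIntegral.integral_sub intervalIntegrable_const intervalIntegrable_id]
      simp only [intervalIntegral.integral_const, integral_id, smul_eq_mul, hm]
      ring
    · rw [uIcc_of_le ham] at hx; linarith [hx.2]
  have hkernel₂ : ∫ x in m..b, |m - x| = (b - a) ^ 2 / 8 := by
    rw [integral_congr (g := fun x => x - m) fun x hx => abs_of_nonpos ?_ |>.trans (neg_sub _ _)]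
    · rw [intervalIntegral.integral_sub intervalIntegrable_id intervalIntegrable_const]
      simp only [intervalIntegral.integral_const, integral_id, smul_eq_mul, hm]
      ring
    · rw [uIcc_of_le hmb] at hx; linarith [hx.1]
  have hvar : (eVariationOn f' (Icc a m)).toReal + (eVariationOn f' (Icc m b)).toReal
      = (eVariationOn f' (Icc a b)).toReal := by
    rw [← ENNReal.toReal_add hbv₁ hbv₂]
    congr 1
    simpa using eVariationOn.Icc_add_Icc f' (s := univ) ham hmb (mem_univ m)
  rw [integral_sub_trapezoid_eq_integral_mul_sub hab hf hderiv
    (by rw [← uIcc_of_le hab] at hbv; exact hbv.intervalIntegrable) (f' m),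
    ← integral_add_adjacent_intervals (hint le_rfl ham hmb) (hint ham hmb le_rfl), ← hvar]
  calc _ ≤ _ := abs_add_le _ _
    _ ≤ _ := add_le_add (abs_integral_mul_sub_le ham hbv₁ (right_mem_Icc.2 ham) (by fun_prop))
        (abs_integral_mul_sub_le hmb hbv₂ (left_mem_Icc.2 hmb) (by fun_prop))
    _ = _ := by rw [hkernel₁, hkernel₂]; ring

theorem abs_integral_sub_sum_trapezoid_le {f f' : ℝ → ℝ} {x : ℕ → ℝ} (hx : Monotone x)
    {N : ℕ} {h : ℝ} (hstep : ∀ i < N, x (i + 1) - x i = h)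
    (hf : ContinuousOn f (Icc (x 0) (x N)))
    (hderiv : ∀ t ∈ Ioo (x 0) (x N), HasDerivAt f (f' t) t)
    (hbv : BoundedVariationOn f' (Icc (x 0) (x N))) :
    |(∫ t in x 0..x N, f t) - ∑ i ∈ Finset.range N, h * (f (x i) + f (x (i + 1))) / 2|
      ≤ h ^ 2 / 8 * (eVariationOn f' (Icc (x 0) (x N))).toReal := by
  have hsub : ∀ i < N, Icc (x i) (x (i + 1)) ⊆ Icc (x 0) (x N) := fun i hi =>
    Icc_subset_Icc (hx (Nat.zero_le i)) (hx hi)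
  have hpiece : ∀ i < N, |(∫ t in x i..x (i + 1), f t) - h * (f (x i) + f (x (i + 1))) / 2|
      ≤ h ^ 2 / 8 * (eVariationOn f' (Icc (x i) (x (i + 1)))).toReal := fun i hi => by
    rw [← hstep i hi]
    exact abs_integral_sub_trapezoid_le (hx i.le_succ) (hf.mono (hsub i hi))
      (fun t ht => hderiv t (Ioo_subset_Ioo (hx (Nat.zero_le i)) (hx hi) ht)) (hbv.mono (hsub i hi))
  have hvar : ∑ i ∈ Finset.range N, (eVariationOn f' (Icc (x i) (x (i + 1)))).toReal
      = (eVariationOn f' (Icc (x 0) (x N))).toReal := by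
    rw [← ENNReal.toReal_sum fun i hi => hbv.mono (hsub i (Finset.mem_range.1 hi))]
    simpa using congrArg ENNReal.toReal (eVariationOn.sum f' (s := univ) hx fun _ _ _ => mem_univ _)
  rw [← sum_integral_adjacent_intervals fun i hi =>
      (hf.mono (hsub i hi)).intervalIntegrable_of_Icc (hx i.le_succ),
    ← Finset.sum_sub_distrib, ← hvar, Finset.mul_sum]
  exact (Finset.abs_sum_le_sum_abs _ _).trans
    (Finset.sum_le_sum fun i hi => hpiece i (Finset.mem_range.1 hi))

/-- Error bound for the composite trapezoidal rule on `[0,1]` with `n` equally spaced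
nodes `x_i = (i-1)/(n-1)` (here indexed from `0`):
`|∫₀¹ f − T_n(f)| ≤ Var(f′) / (8 (n−1)²)`. -/
theorem trapezoid_error
    (n : ℕ) (hn : 2 ≤ n) (f f' : ℝ → ℝ)
    (hf : ContinuousOn f (Icc 0 1))
    (hderiv : ∀ x ∈ Icc (0:ℝ) 1, HasDerivWithinAt f (f' x) (Icc 0 1) x)
    (hbv : BoundedVariationOn f' (Icc 0 1)) :
    |(∫ x in (0:ℝ)..1, f x) -
        (∑ i ∈ Finset.range (n - 1),
          (f ((i : ℝ) / ((n : ℝ) - 1)) + f (((i : ℝ) + 1) / ((n : ℝ) - 1))))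
          / (2 * ((n : ℝ) - 1))|
      ≤ (eVariationOn f' (Icc 0 1)).toReal / (8 * ((n : ℝ) - 1) ^ 2) := by
  obtain ⟨N, rfl⟩ : ∃ N, n = N + 1 := ⟨n - 1, by omega⟩
  have hN : (0 : ℝ) < N := by exact_mod_cast (by omega : 0 < N)
  have hx : Monotone fun i : ℕ => (i : ℝ) / N := fun i j hij =>
    div_le_div_of_nonneg_right (Nat.cast_le.2 hij) hN.le
  have hx0 : ((0 : ℕ) : ℝ) / N = 0 := by simp
  have hxN : (N : ℝ) / N = 1 := div_self hN.ne'
  have hderivAt : ∀ t ∈ Ioo (0 : ℝ) 1, HasDerivAt f (f' t) t := fun t ht =>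
    (hderiv t (Ioo_subset_Icc_self ht)).hasDerivAt (Icc_mem_nhds ht.1 ht.2)
  have key := abs_integral_sub_sum_trapezoid_le (f := f) (f' := f') hx (N := N) (h := 1 / N)
    (fun i _ => by push_cast; ring) (by rwa [hx0, hxN]) (by rwa [hx0, hxN]) (by rwa [hx0, hxN])
  simp only [hx0, hxN, Nat.cast_add, Nat.cast_one, add_sub_cancel_right, Nat.add_sub_cancel]
    at key ⊢
  convert key using 3
  · rw [Finset.sum_div]; congr 1; ext i; field_simp
  · field_simp
end

section
/- Let n ≥ 3 be an integer, let x_i = (i−1)/(n−1) for i = 1,…,n, and let f : [0,1] → ℝ be continuous and differentiable with derivative f′ of finite total variation on [0,1]. Define F_n(f) = (n−1) Σ_{i=1}^{n−2} |f(x_i) − 2f(x_{i+1}) + f(x_{i+2})|. Then F_n(f) ≤ Var(f′); that is, the total variation of the derivative of the linear spline interpolant never overestimates Var(f′). -/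
/-!
By the mean value theorem, each difference quotient `(n−1)(f(x_{i+1}) − f(x_i))` equals `f′(ξ_i)`
for some `ξ_i ∈ (x_i, x_{i+1})`. Hence `(n−1)` times the `i`-th second difference is
`f′(ξ_{i+1}) − f′(ξ_i)`, and since `ξ_0 < ξ_1 < ⋯` the sum of their absolute values is one of
the sums in the supremum defining `Var(f′)`.
-/

open MeasureTheory Set

theorem exists_mem_Ioo_eq_slope_of_hasDerivWithinAt {f f' : ℝ → ℝ} {s : Set ℝ}
    (hs : s.OrdConnected) (hderiv : ∀ x ∈ s, HasDerivWithinAt f (f' x) s x)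
    {a b : ℝ} (hab : a < b) (ha : a ∈ s) (hb : b ∈ s) :
    ∃ c ∈ Ioo a b, f' c = slope f a b := by
  have hsub : Icc a b ⊆ s := hs.out ha hb
  have hcont : ContinuousOn f (Icc a b) := fun x hx =>
    ((hderiv x (hsub hx)).continuousWithinAt).mono hsub
  have hderivAt : ∀ x ∈ Ioo a b, HasDerivAt f (f' x) x := fun x hx =>
    (hderiv x (hsub (Ioo_subset_Icc_self hx))).hasDerivAt
      (Filter.mem_of_superset (Icc_mem_nhds hx.1 hx.2) hsub)
  rw [slope_def_field]
  exact exists_hasDerivAt_eq_slope f f' hab hcont hderivAt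

theorem ofReal_sum_abs_sub_slope_le_eVariationOn {f f' : ℝ → ℝ} {s : Set ℝ}
    (hs : s.OrdConnected) (hderiv : ∀ x ∈ s, HasDerivWithinAt f (f' x) s x)
    {x : ℕ → ℝ} {m : ℕ} (hx : StrictMonoOn x (Iic (m + 1))) (hxs : ∀ i ≤ m + 1, x i ∈ s) :
    ENNReal.ofReal (∑ i ∈ Finset.range m,
        |slope f (x (i + 1)) (x (i + 2)) - slope f (x i) (x (i + 1))|)
      ≤ eVariationOn f' s := by
  have hmvt : ∀ i ≤ m, ∃ c ∈ Ioo (x i) (x (i + 1)), f' c = slope f (x i) (x (i + 1)) :=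
    fun i hi => exists_mem_Ioo_eq_slope_of_hasDerivWithinAt hs hderiv
      (hx (mem_Iic.2 (by omega)) (mem_Iic.2 (by omega)) (by omega))
      (hxs i (by omega)) (hxs (i + 1) (by omega))
  choose! ξ hξ hξ_eq using hmvt
  have hξ_mono : MonotoneOn ξ (Iic m) := by
    intro i hi j hj hij
    rcases hij.eq_or_lt with rfl | hlt
    · exact le_rfl
    calc ξ i ≤ x (i + 1) := (hξ i hi).2.le
      _ ≤ x j := hx.monotoneOn (mem_Iic.2 (by simp at hi; omega))
          (mem_Iic.2 (by simp at hj; omega)) hlt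
      _ ≤ ξ j := (hξ j hj).1.le
  have hξs : ∀ i ≤ m, ξ i ∈ s := fun i hi =>
    (OrdConnected.out hs (hxs i (by omega)) (hxs (i + 1) (by omega)))
      (Ioo_subset_Icc_self (hξ i hi))
  calc ENNReal.ofReal (∑ i ∈ Finset.range m,
          |slope f (x (i + 1)) (x (i + 2)) - slope f (x i) (x (i + 1))|)
      = ∑ i ∈ Finset.range m, edist (f' (ξ (i + 1))) (f' (ξ i)) := by
        rw [ENNReal.ofReal_sum_of_nonneg fun _ _ => abs_nonneg _]
        refine Finset.sum_congr rfl fun i hi => ?_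
        have hi : i < m := Finset.mem_range.1 hi
        rw [edist_dist, Real.dist_eq, hξ_eq i (by omega), hξ_eq (i + 1) hi]
    _ ≤ eVariationOn f' s := eVariationOn.sum_le_of_monotoneOn_Iic hξ_mono hξs

theorem slope_sub_slope_div_eq (f : ℝ → ℝ) {d : ℝ} (hd : d ≠ 0) (t : ℝ) :
    slope f ((t + 1) / d) ((t + 2) / d) - slope f (t / d) ((t + 1) / d)
      = d * (f (t / d) - 2 * f ((t + 1) / d) + f ((t + 2) / d)) := by
  simp only [slope_def_field]
  field_simp
  ring

theorem Fn_never_overestimates_var_general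
    (n : ℕ) (hn : 3 ≤ n) (f f' : ℝ → ℝ)
    (hderiv : ∀ x ∈ Icc (0:ℝ) 1, HasDerivWithinAt f (f' x) (Icc 0 1) x)
    (hbv : BoundedVariationOn f' (Icc 0 1)) :
    ((n : ℝ) - 1) *
        ∑ i ∈ Finset.range (n - 2),
          |f ((i : ℝ) / ((n : ℝ) - 1)) - 2 * f (((i : ℝ) + 1) / ((n : ℝ) - 1))
            + f (((i : ℝ) + 2) / ((n : ℝ) - 1))|
      ≤ (eVariationOn f' (Icc 0 1)).toReal := by
  set d : ℝ := (n : ℝ) - 1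
  have hd : 0 < d := by
    have : (3 : ℝ) ≤ n := by exact_mod_cast hn
    linarith
  have hnodes_mono : StrictMono fun i : ℕ => (i : ℝ) / d :=
    fun i j hij => div_lt_div_of_pos_right (by exact_mod_cast hij) hd
  have hnodes_mem : ∀ i ≤ n - 2 + 1, (i : ℝ) / d ∈ Icc (0 : ℝ) 1 := fun i hi => by
    have : (i : ℝ) ≤ d := by
      simp only [d]
      rw [le_sub_iff_add_le]
      exact_mod_cast (show i + 1 ≤ n by omega)
    exact ⟨by positivity, (div_le_one hd).2 this⟩
  have hvar := ofReal_sum_abs_sub_slope_le_eVariationOn (f := f) ordConnected_Icc hderiv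
    (hnodes_mono.strictMonoOn _) hnodes_mem
  push_cast at hvar
  simp only [slope_sub_slope_div_eq f hd.ne', abs_mul, abs_of_pos hd, ← Finset.mul_sum] at hvar
  exact (ENNReal.ofReal_le_iff_le_toReal hbv).1 hvar

/-- The total variation of the derivative of the linear spline interpolant,
`F_n(f) = (n−1) Σ_{i=1}^{n−2} |f(x_i) − 2f(x_{i+1}) + f(x_{i+2})|`,
never overestimates `Var(f′)`. -/
theorem Fn_never_overestimates_var
    (n : ℕ) (hn : 3 ≤ n) (f f' : ℝ → ℝ)
    (hf : ContinuousOn f (Icc 0 1))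
    (hderiv : ∀ x ∈ Icc (0:ℝ) 1, HasDerivWithinAt f (f' x) (Icc 0 1) x)
    (hbv : BoundedVariationOn f' (Icc 0 1)) :
    ((n : ℝ) - 1) *
        ∑ i ∈ Finset.range (n - 2),
          |f ((i : ℝ) / ((n : ℝ) - 1)) - 2 * f (((i : ℝ) + 1) / ((n : ℝ) - 1))
            + f (((i : ℝ) + 2) / ((n : ℝ) - 1))|
      ≤ (eVariationOn f' (Icc 0 1)).toReal :=
  Fn_never_overestimates_var_general n hn f f' hderiv hbv
end

section
/- Let n be a nonnegative integer and let ξ_1, …, ξ_n be any points in [0,1]. Then there exists a function g : [0,1] → ℝ of total variation Var(g) ≤ 1 such that the function f(x) = ∫₀ˣ g(t) dt satisfies f(ξ_i) = 0 for all i = 1,…,n and ∫₀¹ f(x) dx ≥ 1/(16(n+1)²). (Fooling-function construction underlying the lower complexity bound for integration on balls: f is a triangle-shaped bump supported on the largest gap between consecutive sample points.) -/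
/-!
Split `[0, 1]` into the `n + 1` intervals `[k/(n+1), (k+1)/(n+1)]`; by pigeonhole the interior of
one of them, `(a, b)`, contains no sample point. Take for `f` the tent over `[a, b]` with slopes
`±1/4`. Its derivative `g` is a step function with jumps `1/4, -1/2, 1/4`, so `Var(g) ≤ 1`; `f`
vanishes outside `(a, b)`, and `∫₀¹ f = (b - a)²/16 = 1/(16(n+1)²)`.
-/

open MeasureTheory Set

section Variation

variable {α : Type*} [LinearOrder α]

theorem eVariationOn_add_le {E : Type*} [SeminormedAddCommGroup E] (f g : α → E) (s : Set α) :
    eVariationOn (f + g) s ≤ eVariationOn f s + eVariationOn g s := by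
  refine iSup_le fun ⟨n, u, hu, us⟩ => ?_
  calc ∑ i ∈ Finset.range n, edist ((f + g) (u (i + 1))) ((f + g) (u i))
      ≤ ∑ i ∈ Finset.range n,
          (edist (f (u (i + 1))) (f (u i)) + edist (g (u (i + 1))) (g (u i))) :=
        Finset.sum_le_sum fun i _ => edist_add_add_le _ _ _ _
    _ ≤ eVariationOn f s + eVariationOn g s := by
        rw [Finset.sum_add_distrib]
        exact add_le_add (eVariationOn.sum_le hu us) (eVariationOn.sum_le hu us)

theorem eVariationOn_const_smul_le {𝕜 E : Type*} [SeminormedAddGroup 𝕜] [SeminormedAddGroup E]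
    [SMulZeroClass 𝕜 E] [IsBoundedSMul 𝕜 E] (c : 𝕜) (f : α → E) (s : Set α) :
    eVariationOn (c • f) s ≤ ‖c‖₊ * eVariationOn f s :=
  (lipschitzWith_smul c).lipschitzOnWith.comp_eVariationOn_le (mapsTo_univ _ _)

theorem monotone_indicator_Ici_one (c : α) : Monotone ((Ici c).indicator (1 : α → ℝ)) := by
  intro x y hxy
  by_cases hx : c ≤ x
  · simp [indicator, hx, hx.trans hxy]
  · rw [indicator_of_notMem (notMem_Ici.2 (not_le.1 hx))]
    exact indicator_nonneg (fun _ _ => zero_le_one) y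

theorem eVariationOn_indicator_Ici_one_le (c : α) (s : Set α) :
    eVariationOn ((Ici c).indicator (1 : α → ℝ)) s ≤ 1 := by
  rw [eVariationOn.eq_biSup_inter_Icc]
  refine iSup₂_le fun p hp => ?_
  rw [((monotone_indicator_Ici_one c).monotoneOn s).eVariationOn_eq hp.1 hp.2.1,
    ENNReal.ofReal_le_one]
  have h0 : 0 ≤ (Ici c).indicator (1 : α → ℝ) p.1 := indicator_nonneg (fun _ _ => zero_le_one) _
  have h1 : (Ici c).indicator (1 : α → ℝ) p.2 ≤ 1 := by unfold indicator; split_ifs <;> norm_num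
  linarith

end Variation

noncomputable section

def ramp (c x : ℝ) : ℝ := max (x - c) 0

theorem continuous_ramp (c : ℝ) : Continuous (ramp c) := by
  unfold ramp; fun_prop

theorem ramp_of_le {c x : ℝ} (h : x ≤ c) : ramp c x = 0 := max_eq_right (by linarith)

theorem ramp_of_ge {c x : ℝ} (h : c ≤ x) : ramp c x = x - c := max_eq_left (by linarith)

theorem hasDerivWithinAt_ramp_Ioi (c x : ℝ) :
    HasDerivWithinAt (ramp c) ((Ici c).indicator 1 x) (Ioi x) x := by
  rcases lt_or_ge x c with hxc | hcx
  · rw [indicator_of_notMem (notMem_Ici.2 hxc)]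
    refine (hasDerivWithinAt_const x _ 0).congr_of_eventuallyEq ?_ (ramp_of_le hxc.le)
    filter_upwards [nhdsWithin_le_nhds (Iio_mem_nhds hxc)] with y hy using ramp_of_le (le_of_lt hy)
  · rw [indicator_of_mem (mem_Ici.2 hcx), Pi.one_apply]
    exact ((hasDerivWithinAt_id x _).sub_const c).congr
      (fun y hy => ramp_of_ge (hcx.trans (le_of_lt hy))) (ramp_of_ge hcx)

theorem intervalIntegrable_indicator_Ici_one (c p q : ℝ) :
    IntervalIntegrable ((Ici c).indicator (1 : ℝ → ℝ)) volume p q :=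
  (monotone_indicator_Ici_one c).intervalIntegrable

theorem integral_indicator_Ici_one (c p q : ℝ) :
    ∫ t in p..q, (Ici c).indicator 1 t = ramp c q - ramp c p :=
  intervalIntegral.integral_eq_sub_of_hasDeriv_right (continuous_ramp c).continuousOn
    (fun x _ => hasDerivWithinAt_ramp_Ioi c x) (intervalIntegrable_indicator_Ici_one c p q)

theorem integral_ramp {c p q : ℝ} (hpc : p ≤ c) (hcq : c ≤ q) :
    ∫ x in p..q, ramp c x = (q - c) ^ 2 / 2 := by
  have hi (u v : ℝ) : IntervalIntegrable (ramp c) volume u v :=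
    (continuous_ramp c).intervalIntegrable u v
  have hleft : ∫ x in p..c, ramp c x = 0 := by
    rw [intervalIntegral.integral_congr (g := fun _ => (0 : ℝ)), intervalIntegral.integral_zero]
    intro x hx
    exact ramp_of_le (by rw [uIcc_of_le hpc] at hx; exact hx.2)
  have hright : ∫ x in c..q, ramp c x = ∫ x in c..q, (x - c) := by
    refine intervalIntegral.integral_congr fun x hx => ?_
    exact ramp_of_ge (by rw [uIcc_of_le hcq] at hx; exact hx.1)
  rw [← intervalIntegral.integral_add_adjacent_intervals (hi p c) (hi c q), hleft, hright,
    intervalIntegral.integral_comp_sub_right (fun x => x), integral_id]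
  ring

variable {a b : ℝ}

-- The tent over `[a, b]` with slopes `±1/4` and peak `(b - a)/8` at the midpoint.
def tent (a b x : ℝ) : ℝ := 4⁻¹ * ramp a x - 2⁻¹ * ramp ((a + b) / 2) x + 4⁻¹ * ramp b x

def tentDeriv (a b : ℝ) : ℝ → ℝ :=
  (4⁻¹ : ℝ) • (Ici a).indicator 1 + (-2⁻¹ : ℝ) • (Ici ((a + b) / 2)).indicator 1 +
    (4⁻¹ : ℝ) • (Ici b).indicator 1

theorem tent_eq_zero_of_notMem_Ioo (hab : a ≤ b) {x : ℝ} (hx : x ∉ Ioo a b) : tent a b x = 0 := by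
  rcases le_or_gt x a with hxa | hax
  · rw [tent, ramp_of_le hxa, ramp_of_le (by linarith), ramp_of_le (by linarith)]
    ring
  · have hbx : b ≤ x := not_lt.1 fun hxb => hx ⟨hax, hxb⟩
    rw [tent, ramp_of_ge (by linarith), ramp_of_ge (by linarith), ramp_of_ge hbx]
    ring

theorem integral_tent (ha : 0 ≤ a) (hab : a ≤ b) (hb : b ≤ 1) :
    ∫ x in (0 : ℝ)..1, tent a b x = (b - a) ^ 2 / 16 := by
  have hi (c k : ℝ) : IntervalIntegrable (fun x => k * ramp c x) volume 0 1 :=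
    ((continuous_ramp c).intervalIntegrable 0 1).const_mul k
  simp only [tent]
  rw [intervalIntegral.integral_add ((hi _ _).sub (hi _ _)) (hi _ _),
    intervalIntegral.integral_sub (hi _ _) (hi _ _), intervalIntegral.integral_const_mul,
    intervalIntegral.integral_const_mul, intervalIntegral.integral_const_mul,
    integral_ramp ha (by linarith), integral_ramp (by linarith) (by linarith),
    integral_ramp (by linarith) hb]
  ring

theorem integral_tentDeriv (ha : 0 ≤ a) (hab : a ≤ b) (x : ℝ) :
    ∫ t in (0 : ℝ)..x, tentDeriv a b t = tent a b x := by
  have hi (c k : ℝ) : IntervalIntegrable (k • (Ici c).indicator (1 : ℝ → ℝ)) volume 0 x :=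
    (intervalIntegrable_indicator_Ici_one c 0 x).smul k
  simp only [tentDeriv, Pi.add_apply]
  rw [intervalIntegral.integral_add ((hi _ _).add (hi _ _)) (hi _ _),
    intervalIntegral.integral_add (hi _ _) (hi _ _)]
  simp only [Pi.smul_apply, smul_eq_mul, intervalIntegral.integral_const_mul,
    integral_indicator_Ici_one]
  rw [ramp_of_le ha, ramp_of_le (x := 0) (c := (a + b) / 2) (by linarith),
    ramp_of_le (x := 0) (c := b) (by linarith), tent]
  ring

theorem eVariationOn_tentDeriv_le (s : Set ℝ) : eVariationOn (tentDeriv a b) s ≤ 1 := by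
  have hstep (c k : ℝ) : eVariationOn (k • (Ici c).indicator (1 : ℝ → ℝ)) s ≤ ‖k‖₊ :=
    (eVariationOn_const_smul_le k _ s).trans
      (mul_le_of_le_one_right' (eVariationOn_indicator_Ici_one_le c s))
  calc eVariationOn (tentDeriv a b) s
      ≤ (‖(4⁻¹ : ℝ)‖₊ + ‖(-2⁻¹ : ℝ)‖₊ + ‖(4⁻¹ : ℝ)‖₊ : NNReal) := by
        push_cast
        exact (eVariationOn_add_le _ _ s).trans (add_le_add
          ((eVariationOn_add_le _ _ s).trans (add_le_add (hstep _ _) (hstep _ _))) (hstep _ _))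
    _ = 1 := by norm_num

end

theorem exists_forall_notMem_Ioo {ι : Type*} [Fintype ι] (ξ : ι → ℝ) {N : ℕ}
    (hN : Fintype.card ι < N) :
    ∃ k : ℕ, k < N ∧ ∀ i, ξ i ∉ Ioo (k / N : ℝ) ((k + 1) / N) := by
  classical
  have hcard : (Finset.univ.image fun i => ⌊ξ i * N⌋₊).card < (Finset.range N).card :=
    Finset.card_image_le.trans_lt (by simpa using hN)
  obtain ⟨k, hk, hkξ⟩ := Finset.exists_mem_notMem_of_card_lt_card hcard
  refine ⟨k, Finset.mem_range.1 hk, fun i hi => hkξ (Finset.mem_image.2 ⟨i, Finset.mem_univ _, ?_⟩)⟩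
  have hN0 : (0 : ℝ) < N := by exact_mod_cast (Nat.zero_le _).trans_lt hN
  have hlo : (k : ℝ) < ξ i * N := (div_lt_iff₀ hN0).1 hi.1
  have hhi : ξ i * N < k + 1 := (lt_div_iff₀ hN0).1 hi.2
  exact (Nat.floor_eq_iff ((Nat.cast_nonneg k).trans hlo.le)).2 ⟨hlo.le, hhi⟩

theorem fooling_function_integration_general
    (n : ℕ) (ξ : Fin n → ℝ) :
    ∃ g : ℝ → ℝ,
      eVariationOn g (Icc 0 1) ≤ 1 ∧
      (∀ i, (∫ t in (0:ℝ)..(ξ i), g t) = 0) ∧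
      1 / (16 * ((n : ℝ) + 1) ^ 2) ≤ ∫ x in (0:ℝ)..1, ∫ t in (0:ℝ)..x, g t := by
  obtain ⟨k, hk, hgap⟩ := exists_forall_notMem_Ioo ξ (N := n + 1) (by simp)
  push_cast at hgap
  set a : ℝ := k / (n + 1)
  set b : ℝ := (k + 1) / (n + 1)
  have ha : 0 ≤ a := by positivity
  have hab : a ≤ b := div_le_div_of_nonneg_right (by linarith) (by positivity)
  have hb : b ≤ 1 := (div_le_one (by positivity)).2 (by exact_mod_cast hk)
  refine ⟨tentDeriv a b, eVariationOn_tentDeriv_le _, fun i => ?_, ?_⟩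
  · rw [integral_tentDeriv ha hab, tent_eq_zero_of_notMem_Ioo hab (hgap i)]
  · simp_rw [integral_tentDeriv ha hab, integral_tent ha hab hb]
    have hL : b - a = 1 / (n + 1) := by ring
    rw [hL]
    exact (by field_simp : _ = _).le

/-- Fooling-function construction for the lower complexity bound for integration on balls:
for any sample points `ξ_1,…,ξ_n` in `[0,1]` there is a `g` with `Var(g) ≤ 1` such that
`f(x) = ∫₀ˣ g` vanishes at every `ξ_i` while `∫₀¹ f ≥ 1/(16(n+1)²)`. -/
theorem fooling_function_integration
    (n : ℕ) (ξ : Fin n → ℝ) (hξ : ∀ i, ξ i ∈ Icc (0:ℝ) 1) :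
    ∃ g : ℝ → ℝ,
      eVariationOn g (Icc 0 1) ≤ 1 ∧
      (∀ i, (∫ t in (0:ℝ)..(ξ i), g t) = 0) ∧
      1 / (16 * ((n : ℝ) + 1) ^ 2) ≤ ∫ x in (0:ℝ)..1, ∫ t in (0:ℝ)..x, g t :=
  fooling_function_integration_general n ξ
end

section
/- Let f : [0,1] → ℝ be twice differentiable with |f″(x)| ≤ M for all x ∈ [0,1]. Then 2·sup_{0≤x≤1} |f′(x) − (f(1) − f(0))| ≤ M; that is, for the L∞ function-recovery problem the minimal cone constant is τ_min = 2: the weak semi-norm ‖f′ − f(1) + f(0)‖_∞ is at most half of the strong semi-norm ‖f″‖_∞. -/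
/-!
Fix `x ∈ [0, 1]`. Since `|f″| ≤ M`, the derivative of `t ↦ f t - t f′(x)` is bounded by
`M |t - x|`; comparing it with `M (t - x)² / 2` on `[x, 1]` and on `[0, x]` gives
`|f(1) - f(0) - f′(x)| ≤ M (x² + (1 - x)²) / 2 ≤ M / 2`.
-/

open Set

variable {E : Type*} [NormedAddCommGroup E] [NormedSpace ℝ E]

theorem norm_image_sub_le_of_norm_hasDerivWithin_le_deriv {g g' : ℝ → E} {B B' : ℝ → ℝ}
    {a b : ℝ} (hab : a ≤ b) (hg : ∀ t ∈ Icc a b, HasDerivWithinAt g (g' t) (Icc a b) t)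
    (hB : ∀ t, HasDerivAt B (B' t) t) (bound : ∀ t ∈ Icc a b, ‖g' t‖ ≤ B' t) :
    ‖g b - g a‖ ≤ B b - B a := by
  have fence := image_norm_le_of_norm_deriv_right_le_deriv_boundary (f := fun t => g t - g a)
    (B := fun t => B t - B a) (fun t ht => ((hg t ht).sub_const (g a)).continuousWithinAt)
    (fun t ht => ((hg t (Ico_subset_Icc_self ht)).sub_const (g a)).mono_of_mem_nhdsWithin
      (Icc_mem_nhdsGE_of_mem ht))
    (by simp) (fun t => (hB t).sub_const (B a)) (fun t ht => bound t (Ico_subset_Icc_self ht))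
  exact fence (right_mem_Icc.2 hab)

theorem norm_sub_sub_smul_le_of_norm_deriv_sub_le {g g' : ℝ → E} {a b c M : ℝ}
    (hc : c ∈ Icc a b) (hg : ∀ t ∈ Icc a b, HasDerivWithinAt g (g' t) (Icc a b) t)
    (hg' : ∀ t ∈ Icc a b, ‖g' t - g' c‖ ≤ M * |t - c|) :
    ‖g b - g a - (b - a) • g' c‖ ≤ M * ((c - a) ^ 2 + (b - c) ^ 2) / 2 := by
  set h : ℝ → E := fun t => g t - t • g' c
  have hh : ∀ t ∈ Icc a b, HasDerivWithinAt h (g' t - g' c) (Icc a b) t := fun t ht =>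
    ((hg t ht).sub ((hasDerivWithinAt_id t (Icc a b)).smul_const (g' c))).congr_deriv (by simp)
  have left : ‖h c - h a‖ ≤ M * (c - a) ^ 2 / 2 := by
    have := norm_image_sub_le_of_norm_hasDerivWithin_le_deriv
      (B := fun t => -(M * (c - t) ^ 2 / 2)) (B' := fun t => M * (c - t)) hc.1
      (fun t ht => (hh t ⟨ht.1, ht.2.trans hc.2⟩).mono (Icc_subset_Icc_right hc.2))
      (fun t => ((((hasDerivAt_id t).const_sub c).pow 2).const_mul M).div_const 2
        |>.neg |>.congr_deriv (by simp; ring))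
      (fun t ht => by
        rw [← abs_of_nonneg (sub_nonneg.2 ht.2), ← abs_sub_comm]
        exact hg' t ⟨ht.1, ht.2.trans hc.2⟩)
    simpa using this
  have right : ‖h b - h c‖ ≤ M * (b - c) ^ 2 / 2 := by
    have := norm_image_sub_le_of_norm_hasDerivWithin_le_deriv
      (B := fun t => M * (t - c) ^ 2 / 2) (B' := fun t => M * (t - c)) hc.2
      (fun t ht => (hh t ⟨hc.1.trans ht.1, ht.2⟩).mono (Icc_subset_Icc_left hc.1))
      (fun t => ((((hasDerivAt_id t).sub_const c).pow 2).const_mul M).div_const 2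
        |>.congr_deriv (by simp; ring))
      (fun t ht => by
        rw [← abs_of_nonneg (sub_nonneg.2 ht.1)]
        exact hg' t ⟨hc.1.trans ht.1, ht.2⟩)
    simpa using this
  calc ‖g b - g a - (b - a) • g' c‖ = ‖(h b - h c) + (h c - h a)‖ := by
        simp only [h, sub_smul]; congr 1; abel
    _ ≤ ‖h b - h c‖ + ‖h c - h a‖ := norm_add_le _ _
    _ ≤ M * ((c - a) ^ 2 + (b - c) ^ 2) / 2 := by linarith

/-- For the `L∞` function-recovery problem the minimal cone constant is `τ_min = 2`:
`2 ‖f′ − f(1) + f(0)‖_∞ ≤ ‖f″‖_∞` (here `‖f″‖_∞ ≤ M` and the bound holds pointwise). -/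
theorem taumin_recovery
    (M : ℝ) (f f' f'' : ℝ → ℝ)
    (hd1 : ∀ x ∈ Icc (0:ℝ) 1, HasDerivWithinAt f (f' x) (Icc 0 1) x)
    (hd2 : ∀ x ∈ Icc (0:ℝ) 1, HasDerivWithinAt f' (f'' x) (Icc 0 1) x)
    (hM : ∀ x ∈ Icc (0:ℝ) 1, |f'' x| ≤ M) :
    ∀ x ∈ Icc (0:ℝ) 1, 2 * |f' x - (f 1 - f 0)| ≤ M := by
  intro x hx
  have hM₀ : 0 ≤ M := (abs_nonneg _).trans (hM x hx)
  have lipschitz : ∀ t ∈ Icc (0:ℝ) 1, ‖f' t - f' x‖ ≤ M * |t - x| := fun t ht =>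
    (convex_Icc 0 1).norm_image_sub_le_of_norm_hasDerivWithin_le hd2 hM hx ht
  have taylor := norm_sub_sub_smul_le_of_norm_deriv_sub_le hx hd1 lipschitz
  simp only [sub_zero, one_smul, Real.norm_eq_abs] at taylor
  rw [abs_sub_comm] at taylor
  nlinarith [mul_nonneg hM₀ (mul_nonneg hx.1 (sub_nonneg.2 hx.2))]
end

section
/- Let τ ≥ 2 and let n be an integer with n > 1 + τ/2. Let f : [0,1] → ℝ be twice differentiable with bounded second derivative, and suppose f lies in the cone C_τ, i.e., sup_{0≤x≤1} |f″(x)| ≤ τ·sup_{0≤x≤1} |f′(x) − (f(1) − f(0))|. With nodes x_i = (i−1)/(n−1), i = 1,…,n, A_n(f) the piecewise linear interpolant of f, and F̃_n(f) = max_{1≤i≤n−1} |(n−1)[f(x_{i+1}) − f(x_i)] − (f(1)−f(0))|, one has the data-driven error bound sup_{0≤x≤1} |f(x) − A_n(f)(x)| ≤ τ·F̃_n(f) / (4(n−1)(2n−2−τ)). In particular, if τ·F̃_n(f)/(4(n−1)(2n−2−τ)) ≤ ε then the adaptive function-recovery algorithm's stopping criterion guarantees ‖f − A_n(f)‖_∞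 ≤ ε. -/
/-!
Everything rests on the sharp Taylor bound `|f x - f c - f' c (x - c)| ≤ M (x - c)² / 2`
for `f'` `M`-Lipschitz. Applied at a point of a cell `[a, b]` towards both endpoints it shows
that the linear interpolant is within `M (b - a)² / 8` of `f`, and that `f'` is within
`M (b - a) / 2` of the slope of the chord. With `h = 1/(n-1)`, the second estimate and the cone
condition `M ≤ τ S`, where `S = ‖f' - (f 1 - f 0)‖_∞`, give `S ≤ F̃ + τ S h / 2`, i.e.
`S ≤ 2 (n - 1) F̃ / (2n - 2 - τ)`; inserting `M ≤ τ S` into the first estimate gives the bound.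
-/

open Set

section Taylor

variable {s : Set ℝ} {c M : ℝ}

theorem Convex.isMinOn_of_hasDerivWithinAt_sign {g g' : ℝ → ℝ} (hs : Convex ℝ s)
    (hg : ∀ t ∈ s, HasDerivWithinAt g (g' t) s t) (hc : c ∈ s)
    (hleft : ∀ t ∈ s, t < c → g' t ≤ 0) (hright : ∀ t ∈ s, c < t → 0 ≤ g' t) :
    IsMinOn g s c := by
  refine isMinOn_iff.2 fun t ht => ?_
  have hcont : ContinuousOn g s := fun t ht => (hg t ht).continuousWithinAt
  have hderiv : ∀ {a b}, Icc a b ⊆ s →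
      ∀ u ∈ interior (Icc a b), HasDerivWithinAt g (g' u) (interior (Icc a b)) u :=
    fun hsub u hu => (hg u (hsub (interior_subset hu))).mono (interior_subset.trans hsub)
  rcases le_total c t with hct | htc
  · have hsub : Icc c t ⊆ s := hs.ordConnected.out hc ht
    refine monotoneOn_of_hasDerivWithinAt_nonneg (convex_Icc c t) (hcont.mono hsub)
      (hderiv hsub) (fun u hu => ?_) (left_mem_Icc.2 hct) (right_mem_Icc.2 hct) hct
    rw [interior_Icc] at hu
    exact hright u (hsub (Ioo_subset_Icc_self hu)) hu.1
  · have hsub : Icc t c ⊆ s := hs.ordConnected.out ht hc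
    refine antitoneOn_of_hasDerivWithinAt_nonpos (convex_Icc t c) (hcont.mono hsub)
      (hderiv hsub) (fun u hu => ?_) (left_mem_Icc.2 htc) (right_mem_Icc.2 htc) htc
    rw [interior_Icc] at hu
    exact hleft u (hsub (Ioo_subset_Icc_self hu)) hu.2

variable {f f' : ℝ → ℝ}

theorem Convex.abs_taylor_remainder_le (hs : Convex ℝ s)
    (hf : ∀ x ∈ s, HasDerivWithinAt f (f' x) s x)
    (hf' : ∀ u ∈ s, ∀ v ∈ s, |f' u - f' v| ≤ M * |u - v|) (hc : c ∈ s) {x : ℝ} (hx : x ∈ s) :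
    |f x - f c - f' c * (x - c)| ≤ M / 2 * (x - c) ^ 2 := by
  suffices key : ∀ σ : ℝ, |σ| = 1 → σ * (f x - f c - f' c * (x - c)) ≤ M / 2 * (x - c) ^ 2 by
    have h₁ := key 1 (by simp)
    have h₂ := key (-1) (by simp)
    exact abs_le.2 ⟨by linarith, by linarith⟩
  intro σ hσ
  -- `c` minimises `M/2 (t - c)^2 - σ (f t - f c - f' c (t - c))`, whose derivative is
  -- `M (t - c) - σ (f' t - f' c)`, of the sign of `t - c` by the Lipschitz bound.
  have hderiv : ∀ t ∈ s, HasDerivWithinAt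
      (fun t => M / 2 * (t - c) ^ 2 - σ * (f t - f c - f' c * (t - c)))
      (M * (t - c) - σ * (f' t - f' c)) s t := by
    intro t ht
    have hlin := (hasDerivWithinAt_id t s).sub_const c
    have := ((hlin.pow 2).const_mul (M / 2)).sub
      ((((hf t ht).sub_const (f c)).sub (hlin.const_mul (f' c))).const_mul σ)
    exact this.congr_deriv <| by
      simp only [Nat.cast_ofNat, id_eq, Nat.add_one_sub_one, pow_one, mul_one]; ring
  have hσbound : ∀ t ∈ s, |σ * (f' t - f' c)| ≤ M * |t - c| := fun t ht => by
    rw [abs_mul, hσ, one_mul]; exact hf' t ht c hc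
  have hmin := isMinOn_iff.1 (hs.isMinOn_of_hasDerivWithinAt_sign hderiv hc
    (fun t ht htc => by
      have := (abs_le.1 (hσbound t ht)).1
      rw [abs_of_neg (sub_neg.2 htc)] at this; linarith)
    (fun t ht hct => by
      have := (abs_le.1 (hσbound t ht)).2
      rw [abs_of_pos (sub_pos.2 hct)] at this; linarith)) x hx
  simp only [sub_self, mul_zero, zero_pow two_ne_zero] at hmin
  linarith

variable {a b : ℝ}

theorem nonneg_of_abs_sub_le_mul_abs_sub {g : ℝ → ℝ} (h : |g a - g b| ≤ M * |a - b|)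
    (hab : a ≠ b) : 0 ≤ M :=
  nonneg_of_mul_nonneg_left ((abs_nonneg _).trans h) (abs_pos.2 (sub_ne_zero.2 hab))

theorem Convex.abs_sub_linear_interpolation_le (hs : Convex ℝ s)
    (hf : ∀ x ∈ s, HasDerivWithinAt f (f' x) s x)
    (hf' : ∀ u ∈ s, ∀ v ∈ s, |f' u - f' v| ≤ M * |u - v|)
    (ha : a ∈ s) (hb : b ∈ s) (hab : a < b) {x : ℝ} (hx : x ∈ Icc a b) :
    |f x - (f a * (b - x) + f b * (x - a)) / (b - a)| ≤ M / 8 * (b - a) ^ 2 := by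
  have hM := nonneg_of_abs_sub_le_mul_abs_sub (hf' a ha b hb) hab.ne
  have hxs : x ∈ s := hs.ordConnected.out ha hb hx
  have hRa := hs.abs_taylor_remainder_le hf hf' hxs ha
  have hRb := hs.abs_taylor_remainder_le hf hf' hxs hb
  set Ra := f a - f x - f' x * (a - x)
  set Rb := f b - f x - f' x * (b - x)
  have hxa : 0 ≤ x - a := sub_nonneg.2 hx.1
  have hbx : 0 ≤ b - x := sub_nonneg.2 hx.2
  have hba : 0 < b - a := sub_pos.2 hab
  have hid : f x - (f a * (b - x) + f b * (x - a)) / (b - a) =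
      -((b - x) * Ra + (x - a) * Rb) / (b - a) := by
    field_simp
    ring
  rw [hid, abs_div, abs_neg, abs_of_pos hba, div_le_iff₀ hba]
  calc |(b - x) * Ra + (x - a) * Rb|
      ≤ (b - x) * (M / 2 * (a - x) ^ 2) + (x - a) * (M / 2 * (b - x) ^ 2) := by
        refine (abs_add_le _ _).trans ?_
        rw [abs_mul, abs_mul, abs_of_nonneg hxa, abs_of_nonneg hbx]
        gcongr
    _ ≤ M / 8 * (b - a) ^ 2 * (b - a) := by
        -- AM-GM: `4 (x - a) (b - x) ≤ (b - a) ^ 2`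
        nlinarith [mul_nonneg (mul_nonneg hM hba.le) (sq_nonneg (a + b - 2 * x))]

theorem Convex.abs_deriv_sub_slope_le (hs : Convex ℝ s)
    (hf : ∀ x ∈ s, HasDerivWithinAt f (f' x) s x)
    (hf' : ∀ u ∈ s, ∀ v ∈ s, |f' u - f' v| ≤ M * |u - v|)
    (ha : a ∈ s) (hb : b ∈ s) (hab : a < b) {y : ℝ} (hy : y ∈ Icc a b) :
    |f' y - (f b - f a) / (b - a)| ≤ M / 2 * (b - a) := by
  have hM := nonneg_of_abs_sub_le_mul_abs_sub (hf' a ha b hb) hab.ne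
  have hys : y ∈ s := hs.ordConnected.out ha hb hy
  have hRa := hs.abs_taylor_remainder_le hf hf' hys ha
  have hRb := hs.abs_taylor_remainder_le hf hf' hys hb
  have hba : 0 < b - a := sub_pos.2 hab
  have hid : f' y - (f b - f a) / (b - a) =
      ((f a - f y - f' y * (a - y)) - (f b - f y - f' y * (b - y))) / (b - a) := by
    field_simp
    ring
  rw [hid, abs_div, abs_of_pos hba, div_le_iff₀ hba]
  calc _ ≤ M / 2 * (a - y) ^ 2 + M / 2 * (b - y) ^ 2 := (abs_sub _ _).trans (add_le_add hRa hRb)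
    _ ≤ M / 2 * (b - a) * (b - a) := by
        nlinarith [mul_nonneg (mul_nonneg hM (sub_nonneg.2 hy.1)) (sub_nonneg.2 hy.2)]

end Taylor

section Grid

variable {i k : ℕ}

theorem exists_lt_mem_Icc_div {y : ℝ} (hy : y ∈ Icc (0 : ℝ) 1) (hk : 0 < k) :
    ∃ i < k, y ∈ Icc ((i : ℝ) / k) ((i + 1) / k) := by
  have hk' : (0 : ℝ) < k := by exact_mod_cast hk
  have hyk : 0 ≤ y * k := mul_nonneg hy.1 hk'.le
  refine ⟨min ⌊y * k⌋₊ (k - 1), by omega, ?_, ?_⟩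
  · rw [div_le_iff₀ hk']
    calc ((min ⌊y * k⌋₊ (k - 1) : ℕ) : ℝ) ≤ ⌊y * k⌋₊ := by exact_mod_cast min_le_left _ _
      _ ≤ y * k := Nat.floor_le hyk
  · rw [le_div_iff₀ hk']
    rcases le_total ⌊y * k⌋₊ (k - 1) with h | h
    · rw [min_eq_left h]; exact (Nat.lt_floor_add_one _).le
    · rw [min_eq_right h, Nat.cast_sub hk]; push_cast; nlinarith [hy.2]

theorem grid_nodes_mem_Icc (hi : i < k) :
    (i : ℝ) / k ∈ Icc (0 : ℝ) 1 ∧ ((i : ℝ) + 1) / k ∈ Icc (0 : ℝ) 1 := by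
  have hi' : (i : ℝ) + 1 ≤ k := by exact_mod_cast hi
  exact ⟨unitInterval.div_mem (Nat.cast_nonneg _) (Nat.cast_nonneg _) (by linarith),
    unitInterval.div_mem (by positivity) (Nat.cast_nonneg _) hi'⟩

theorem grid_step (i k : ℕ) : ((i : ℝ) + 1) / k - i / k = (k : ℝ)⁻¹ := by
  rw [← sub_div, add_sub_cancel_left, one_div]

end Grid

section Cone

variable {τ F M : ℝ} {k : ℕ} {f f' f'' : ℝ → ℝ}

theorem abs_deriv_sub_secant_le_of_grid (hk : 0 < k)
    (hf : ∀ x ∈ Icc (0 : ℝ) 1, HasDerivWithinAt f (f' x) (Icc 0 1) x)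
    (hf' : ∀ u ∈ Icc (0 : ℝ) 1, ∀ v ∈ Icc (0 : ℝ) 1, |f' u - f' v| ≤ M * |u - v|)
    (hF : ∀ i < k, |(k : ℝ) * (f ((i + 1) / k) - f (i / k)) - (f 1 - f 0)| ≤ F)
    {y : ℝ} (hy : y ∈ Icc (0 : ℝ) 1) :
    |f' y - (f 1 - f 0)| ≤ F + M / (2 * k) := by
  obtain ⟨i, hi, hyi⟩ := exists_lt_mem_Icc_div hy hk
  obtain ⟨ha, hb⟩ := grid_nodes_mem_Icc hi
  have hab : (i : ℝ) / k < (i + 1) / k := sub_pos.1 <| by rw [grid_step]; positivity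
  have hslope := (convex_Icc 0 1).abs_deriv_sub_slope_le hf hf' ha hb hab hyi
  rw [grid_step, div_inv_eq_mul, mul_comm] at hslope
  calc |f' y - (f 1 - f 0)|
      ≤ |f' y - k * (f ((i + 1) / k) - f (i / k))|
        + |k * (f ((i + 1) / k) - f (i / k)) - (f 1 - f 0)| := abs_sub_le _ _ _
    _ ≤ M / 2 * (k : ℝ)⁻¹ + F := add_le_add hslope (hF i hi)
    _ = F + M / (2 * k) := by field_simp; ring

theorem abs_sub_linear_spline_le_of_cone (hτ : 0 ≤ τ) (hk : τ < 2 * k)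
    (hf : ∀ x ∈ Icc (0 : ℝ) 1, HasDerivWithinAt f (f' x) (Icc 0 1) x)
    (hf' : ∀ x ∈ Icc (0 : ℝ) 1, HasDerivWithinAt f' (f'' x) (Icc 0 1) x)
    (hcone : ∀ x ∈ Icc (0 : ℝ) 1, |f'' x| ≤ τ * ⨆ y : Icc (0 : ℝ) 1, |f' y.1 - (f 1 - f 0)|)
    (hF : ∀ i < k, |(k : ℝ) * (f ((i + 1) / k) - f (i / k)) - (f 1 - f 0)| ≤ F)
    {i : ℕ} (hi : i < k) {x : ℝ} (hx : x ∈ Icc ((i : ℝ) / k) ((i + 1) / k)) :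
    |f x - k * (f (i / k) * ((i + 1) / k - x) + f ((i + 1) / k) * (x - i / k))|
      ≤ τ * F / (4 * k * (2 * k - τ)) := by
  have hk0 : (0 : ℝ) < k := by linarith
  have hgap : 0 < 2 * (k : ℝ) - τ := by linarith
  set S := ⨆ y : Icc (0 : ℝ) 1, |f' y.1 - (f 1 - f 0)|
  have hlip : ∀ u ∈ Icc (0 : ℝ) 1, ∀ v ∈ Icc (0 : ℝ) 1, |f' u - f' v| ≤ τ * S * |u - v| :=
    fun u hu v hv => by
      simpa only [Real.norm_eq_abs] using
        (convex_Icc (0 : ℝ) 1).norm_image_sub_le_of_norm_hasDerivWithin_le hf'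
          (fun z hz => by simpa only [Real.norm_eq_abs] using hcone z hz) hv hu
  have hS : S * (2 * k - τ) ≤ 2 * k * F := by
    have : Nonempty (Icc (0 : ℝ) 1) := ⟨⟨0, left_mem_Icc.2 zero_le_one⟩⟩
    have hS' : S ≤ F + τ * S / (2 * k) :=
      ciSup_le fun y => abs_deriv_sub_secant_le_of_grid (by exact_mod_cast hk0) hf hlip hF y.2
    have h2k : (0 : ℝ) < 2 * k := by positivity
    have hS'' := mul_le_mul_of_nonneg_right hS' h2k.le
    rw [add_mul, div_mul_cancel₀ _ h2k.ne'] at hS''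
    linarith
  obtain ⟨ha, hb⟩ := grid_nodes_mem_Icc hi
  have hab : (i : ℝ) / k < (i + 1) / k := sub_pos.1 <| by rw [grid_step]; positivity
  have hinterp := (convex_Icc 0 1).abs_sub_linear_interpolation_le hf hlip ha hb hab hx
  rw [grid_step, div_inv_eq_mul, mul_comm] at hinterp
  refine hinterp.trans ?_
  calc τ * S / 8 * (k : ℝ)⁻¹ ^ 2 = τ * (S * (2 * k - τ)) / (8 * k ^ 2 * (2 * k - τ)) := by
        rw [← mul_assoc, mul_div_mul_right _ _ hgap.ne']
        field_simp
    _ ≤ τ * (2 * k * F) / (8 * k ^ 2 * (2 * k - τ)) := by gcongr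
    _ = τ * F / (4 * k * (2 * k - τ)) := by field_simp; ring

end Cone

/-- Data-driven error bound for the adaptive linear spline algorithm on the cone
`C_τ = {f : ‖f″‖_∞ ≤ τ ‖f′ − f(1) + f(0)‖_∞}`: for `n > 1 + τ/2`,
`‖f − A_n(f)‖_∞ ≤ τ F̃_n(f) / (4(n−1)(2n−2−τ))`, where
`F̃_n(f) = max_i |(n−1)[f(x_{i+1}) − f(x_i)] − (f(1) − f(0))|`; hence the stopping
criterion `τ F̃_n(f)/(4(n−1)(2n−2−τ)) ≤ ε` guarantees `‖f − A_n(f)‖_∞ ≤ ε`. -/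
theorem adaptive_spline_error_bound
    (τ : ℝ) (hτ : 2 ≤ τ)
    (n : ℕ) (hn : 1 + τ / 2 < (n : ℝ))
    (f f' f'' : ℝ → ℝ)
    (hd1 : ∀ x ∈ Icc (0:ℝ) 1, HasDerivWithinAt f (f' x) (Icc 0 1) x)
    (hd2 : ∀ x ∈ Icc (0:ℝ) 1, HasDerivWithinAt f' (f'' x) (Icc 0 1) x)
    (hcone : ∀ x ∈ Icc (0:ℝ) 1,
      |f'' x| ≤ τ * ⨆ y : Icc (0:ℝ) 1, |f' y.1 - (f 1 - f 0)|)
    (Ft : ℝ)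
    (hFt : Ft = (Finset.range (n - 1)).sup'
      (Finset.nonempty_range_iff.mpr (by
        have : (2:ℝ) ≤ (n:ℝ) := by nlinarith
        have : 2 ≤ n := by exact_mod_cast this
        omega))
      (fun i =>
        |((n : ℝ) - 1) *
            (f (((i : ℝ) + 1) / ((n : ℝ) - 1)) - f ((i : ℝ) / ((n : ℝ) - 1)))
          - (f 1 - f 0)|)) :
    (∀ i ∈ Finset.range (n - 1),
      ∀ x ∈ Icc ((i : ℝ) / ((n : ℝ) - 1)) (((i : ℝ) + 1) / ((n : ℝ) - 1)),
        |f x - ((n : ℝ) - 1) *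
            (f ((i : ℝ) / ((n : ℝ) - 1)) * (((i : ℝ) + 1) / ((n : ℝ) - 1) - x)
              + f (((i : ℝ) + 1) / ((n : ℝ) - 1)) * (x - (i : ℝ) / ((n : ℝ) - 1)))|
          ≤ τ * Ft / (4 * ((n : ℝ) - 1) * (2 * (n : ℝ) - 2 - τ))) ∧
    ∀ ε : ℝ, τ * Ft / (4 * ((n : ℝ) - 1) * (2 * (n : ℝ) - 2 - τ)) ≤ ε →
      ∀ i ∈ Finset.range (n - 1),
        ∀ x ∈ Icc ((i : ℝ) / ((n : ℝ) - 1)) (((i : ℝ) + 1) / ((n : ℝ) - 1)),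
          |f x - ((n : ℝ) - 1) *
              (f ((i : ℝ) / ((n : ℝ) - 1)) * (((i : ℝ) + 1) / ((n : ℝ) - 1) - x)
                + f (((i : ℝ) + 1) / ((n : ℝ) - 1)) * (x - (i : ℝ) / ((n : ℝ) - 1)))|
            ≤ ε := by
  have hn1 : 1 ≤ n := by exact_mod_cast (by linarith : (1 : ℝ) ≤ n)
  have hk : ((n - 1 : ℕ) : ℝ) = n - 1 := by rw [Nat.cast_sub hn1, Nat.cast_one]
  refine (fun hspline => ⟨hspline, fun ε hε i hi x hx => (hspline i hi x hx).trans hε⟩) ?_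
  intro i hi x hx
  rw [← hk] at hx
  rw [← hk, show 2 * (n : ℝ) - 2 - τ = 2 * ((n - 1 : ℕ) : ℝ) - τ by rw [hk]; ring]
  refine abs_sub_linear_spline_le_of_cone (by linarith) (by rw [hk]; linarith) hd1 hd2 hcone
    (fun j hj => ?_) (Finset.mem_range.1 hi) hx
  rw [hk, hFt]
  apply Finset.le_sup' _ (Finset.mem_range.2 hj)
end

section
/- Let τ > 2, s > 0, let n be a nonnegative integer, and let ξ_1, …, ξ_n be any points in [0,1]. Then there exist two continuously differentiable functions f₊, f₋ : [0,1] → ℝ with Lipschitz derivatives such that: (i) f′_± is Lipschitz with constant at most s on [0,1] (so ‖f″_±‖_∞ ≤ s); (ii) both f₊ and f₋ lie in the cone C_τ, i.e., the Lipschitz constant of f′_± is at most τ·sup_{0≤x≤1} |f′_±(x) − (f_±(1) − f_±(0))|; (iii) f₊(ξ_i) = f₋(ξ_i) for all i = 1,…,n; and (iv) sup_{0≤x≤1} |f₊(x) − f₋(x)| ≥ s(τ−2)/(16τ(n+1)²). Consequently, any deterministic algorithm for L∞ recovery that uses only the n function values f(ξ_1),…,f(ξ_n) must make an error of at least s(τ−2)/(32τ(n+1)²)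 on at least one function in C_τ with ‖f″‖_∞ ≤ s. -/
/-!
Split `[0, 1]` into `n + 1` cells of length `1 / (n + 1)`; by pigeonhole one cell `[a, a + 2πr]`
contains no node `ξ i`. On it put the bump `β` with `β′(x) = r sin ((x - a) / r)`, so that `β′`
is `1`-Lipschitz, `β` vanishes off the cell and `β (a + πr) = 2r²`. The functions
`f± = (s/τ) x(1 - x) ± (s(τ - 2)/τ) β` agree at the nodes, satisfy `f±(1) = f±(0)` and
`f±′(0) = s/τ`, so `s ≤ τ ‖f±′ - f±(1) + f±(0)‖_∞`, while `f±′` is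
`(2s/τ + s(τ - 2)/τ) = s`-Lipschitz.
They differ by `4 (s(τ - 2)/τ) r² ≥ s(τ - 2)/(16τ(n + 1)²)` at the peak, and an algorithm,
receiving the same data for both, misses one of them by half of that.
-/

open Set Real

theorem exists_forall_notMem_Ioo_div (n : ℕ) (ξ : Fin n → ℝ) :
    ∃ k : ℕ, k ≤ n ∧ ∀ i, ξ i ∉ Ioo ((k : ℝ) / (n + 1)) ((k + 1) / (n + 1)) := by
  by_contra! h
  choose j hj using fun k : Fin (n + 1) => h k k.is_le
  obtain ⟨k₁, k₂, hne, heq⟩ := Fintype.exists_ne_map_eq_of_card_lt j (by simp)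
  wlog hlt : k₁ < k₂ generalizing k₁ k₂
  · exact this k₂ k₁ hne.symm heq.symm (lt_of_le_of_ne (not_lt.mp hlt) hne.symm)
  have hcells : ((k₁ : ℕ) + 1 : ℝ) / (n + 1) ≤ (k₂ : ℕ) / (n + 1) := by
    gcongr
    exact_mod_cast hlt
  linarith [(hj k₁).2, heq ▸ (hj k₂).1]

section Bump

noncomputable def bumpDeriv (a r x : ℝ) : ℝ :=
  r * sin (projIcc 0 (2 * π) two_pi_pos.le ((x - a) / r))

noncomputable def bump (a r x : ℝ) : ℝ :=
  ∫ t in a..x, bumpDeriv a r t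

variable {a r : ℝ}

theorem continuous_bumpDeriv (a r : ℝ) : Continuous (bumpDeriv a r) := by
  unfold bumpDeriv
  fun_prop

theorem bumpDeriv_of_mem_Icc (hr : 0 < r) {x : ℝ} (hx : x ∈ Icc a (a + 2 * π * r)) :
    bumpDeriv a r x = r * sin ((x - a) / r) := by
  have hmem : (x - a) / r ∈ Icc 0 (2 * π) :=
    ⟨div_nonneg (by linarith [hx.1]) hr.le, (div_le_iff₀ hr).2 (by linarith [hx.2])⟩
  rw [bumpDeriv, projIcc_of_mem _ hmem]

theorem bumpDeriv_eq_zero_of_notMem_Ioo (hr : 0 < r) {x : ℝ}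
    (hx : x ∉ Ioo a (a + 2 * π * r)) : bumpDeriv a r x = 0 := by
  rw [mem_Ioo, not_and_or, not_lt, not_lt] at hx
  rcases hx with hx | hx
  · rw [bumpDeriv, projIcc_of_le_left _ (div_nonpos_of_nonpos_of_nonneg (by linarith) hr.le)]
    simp
  · rw [bumpDeriv, projIcc_of_right_le _ ((le_div_iff₀ hr).2 (by linarith))]
    simp

theorem abs_bumpDeriv_sub_le (hr : 0 < r) (x y : ℝ) :
    |bumpDeriv a r x - bumpDeriv a r y| ≤ |x - y| :=
  calc |bumpDeriv a r x - bumpDeriv a r y|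
      = r * |sin (projIcc 0 (2 * π) two_pi_pos.le ((x - a) / r))
          - sin (projIcc 0 (2 * π) two_pi_pos.le ((y - a) / r))| := by
        rw [bumpDeriv, bumpDeriv, ← mul_sub, abs_mul, abs_of_pos hr]
    _ ≤ r * |(x - a) / r - (y - a) / r| :=
        mul_le_mul_of_nonneg_left
          ((abs_sin_sub_sin_le _ _).trans (abs_projIcc_sub_projIcc _)) hr.le
    _ = |x - y| := by
        rw [← sub_div, abs_div, abs_of_pos hr, sub_sub_sub_cancel_right, mul_div_cancel₀ _ hr.ne']

theorem hasDerivAt_bump (a r x : ℝ) : HasDerivAt (bump a r) (bumpDeriv a r x) x :=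
  ((continuous_bumpDeriv a r).integral_hasStrictDerivAt a x).hasDerivAt

theorem bump_add_mul (hr : 0 < r) {u : ℝ} (hu : u ∈ Icc 0 (2 * π)) :
    bump a r (a + u * r) = r ^ 2 * (1 - cos u) := by
  have hderiv : ∀ t ∈ uIcc a (a + u * r),
      HasDerivAt (fun t => -r ^ 2 * cos ((t - a) / r)) (bumpDeriv a r t) t := by
    intro t ht
    rw [uIcc_of_le (by nlinarith [hu.1])] at ht
    rw [bumpDeriv_of_mem_Icc hr ⟨ht.1, by nlinarith [ht.2, hu.2]⟩]
    refine ((((hasDerivAt_id' t).sub_const a).div_const r).cos.const_mul (-r ^ 2)).congr_deriv ?_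
    field_simp
  rw [bump, intervalIntegral.integral_eq_sub_of_hasDerivAt hderiv
    ((continuous_bumpDeriv a r).intervalIntegrable _ _)]
  simp [hr.ne']
  ring

theorem bump_peak (hr : 0 < r) : bump a r (a + π * r) = 2 * r ^ 2 := by
  rw [bump_add_mul hr ⟨pi_pos.le, by linarith [pi_pos]⟩, cos_pi]
  ring

theorem bump_eq_zero_of_notMem_Ioo (hr : 0 < r) {x : ℝ} (hx : x ∉ Ioo a (a + 2 * π * r)) :
    bump a r x = 0 := by
  have hzero : ∀ y z : ℝ, (∀ t ∈ uIcc y z, t ∉ Ioo a (a + 2 * π * r)) →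
      ∫ t in y..z, bumpDeriv a r t = 0 := fun y z h => by
    rw [intervalIntegral.integral_congr fun t ht => bumpDeriv_eq_zero_of_notMem_Ioo hr (h t ht)]
    simp
  rw [mem_Ioo, not_and_or, not_lt, not_lt] at hx
  rcases hx with hx | hx
  · refine hzero a x fun t ht ht' => ?_
    rw [uIcc_of_ge hx] at ht
    linarith [ht.2, ht'.1]
  · have hend : bump a r (a + 2 * π * r) = 0 := by
      rw [bump_add_mul hr ⟨two_pi_pos.le, le_rfl⟩, cos_two_pi, sub_self, mul_zero]
    rw [bump, ← intervalIntegral.integral_add_adjacent_intervals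
      ((continuous_bumpDeriv a r).intervalIntegrable a (a + 2 * π * r))
      ((continuous_bumpDeriv a r).intervalIntegrable _ x), ← bump, hend, zero_add]
    refine hzero _ x fun t ht ht' => ?_
    rw [uIcc_of_le hx] at ht
    linarith [ht.1, ht'.2]

end Bump

/-- `f ∈ C_τ` with `‖f″‖_∞ ≤ s`, where `f'` is the derivative of `f` on `[0, 1]` and the Lipschitz
constant of `f'` stands for `‖f″‖_∞`. -/
structure ConeInput (τ s : ℝ) (f f' : ℝ → ℝ) : Prop where
  hasDerivWithinAt : ∀ x ∈ Icc (0:ℝ) 1, HasDerivWithinAt f (f' x) (Icc 0 1) x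
  lipschitzOnWith : LipschitzOnWith (Real.toNNReal s) f' (Icc 0 1)
  lipschitzOnWith_cone :
    LipschitzOnWith (Real.toNNReal (τ * ⨆ x : Icc (0:ℝ) 1, |f' x.1 - (f 1 - f 0)|)) f' (Icc 0 1)

theorem LipschitzOnWith.toNNReal_mul_iSup_abs_sub {α : Type*} [PseudoMetricSpace α]
    {S : Set α} (hS : IsCompact S) {g : α → ℝ} {τ s c : ℝ} (hτ : 0 ≤ τ)
    (hg : LipschitzOnWith (Real.toNNReal s) g S) {x₀ : α} (hx₀ : x₀ ∈ S)
    (hs : s ≤ τ * |g x₀ - c|) :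
    LipschitzOnWith (Real.toNNReal (τ * ⨆ x : S, |g x - c|)) g S := by
  have : CompactSpace S := isCompact_iff_compactSpace.mp hS
  have hbdd : BddAbove (range fun x : S => |g x - c|) :=
    (isCompact_range ((hg.continuousOn.domRestrict.sub continuous_const).abs)).bddAbove
  exact hg.weaken <| Real.toNNReal_mono <|
    hs.trans (mul_le_mul_of_nonneg_left (le_ciSup hbdd ⟨x₀, hx₀⟩) hτ)

theorem coneInput_quadratic_add_bump {τ s c₀ d a r : ℝ} (hτ : 0 ≤ τ) (hr : 0 < r)
    (ha : 0 ≤ a) (hb : a + 2 * π * r ≤ 1) (hlip : 2 * |c₀| + |d| ≤ s) (hcone : s ≤ τ * |c₀|) :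
    ConeInput τ s (fun x => c₀ * (x * (1 - x)) + d * bump a r x)
      (fun x => c₀ * (1 - 2 * x) + d * bumpDeriv a r x) := by
  have hf'lip : LipschitzOnWith (Real.toNNReal s)
      (fun x => c₀ * (1 - 2 * x) + d * bumpDeriv a r x) (Icc 0 1) := by
    refine LipschitzOnWith.of_dist_le_mul fun x _ y _ => ?_
    have hs : 0 ≤ s := by linarith [abs_nonneg c₀, abs_nonneg d]
    rw [Real.dist_eq, Real.dist_eq, Real.coe_toNNReal _ hs]
    calc |c₀ * (1 - 2 * x) + d * bumpDeriv a r x - (c₀ * (1 - 2 * y) + d * bumpDeriv a r y)|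
        = |c₀ * (2 * (y - x)) + d * (bumpDeriv a r x - bumpDeriv a r y)| := by ring_nf
      _ ≤ |c₀| * (2 * |x - y|) + |d| * |x - y| := by
        refine (abs_add_le _ _).trans (add_le_add ?_ ?_) <;> rw [abs_mul]
        · rw [abs_mul, abs_two, abs_sub_comm]
        · exact mul_le_mul_of_nonneg_left (abs_bumpDeriv_sub_le hr x y) (abs_nonneg d)
      _ ≤ s * |x - y| := by nlinarith [abs_nonneg (x - y)]
  have hnot : ∀ x, x ≤ 0 ∨ 1 ≤ x → x ∉ Ioo a (a + 2 * π * r) := by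
    rintro x (hx | hx) ⟨h₁, h₂⟩ <;> linarith
  refine ⟨fun x _ => ?_, hf'lip, hf'lip.toNNReal_mul_iSup_abs_sub isCompact_Icc hτ
    (left_mem_Icc.2 zero_le_one) ?_⟩
  · have hquad : HasDerivAt (fun x : ℝ => x * (1 - x)) (1 - 2 * x) x :=
      ((hasDerivAt_id' x).mul ((hasDerivAt_id' x).const_sub 1)).congr_deriv (by ring)
    exact ((hquad.const_mul c₀).add ((hasDerivAt_bump a r x).const_mul d)).hasDerivWithinAt
  · simpa [bumpDeriv_eq_zero_of_notMem_Ioo hr (hnot 0 (Or.inl le_rfl)),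
      bump_eq_zero_of_notMem_Ioo hr (hnot 0 (Or.inl le_rfl)),
      bump_eq_zero_of_notMem_Ioo hr (hnot 1 (Or.inr le_rfl))] using hcone

theorem exists_fooling_pair {τ s : ℝ} (hτ : 2 < τ) (hs : 0 < s) {n : ℕ} (ξ : Fin n → ℝ) :
    ∃ fp fp' fm fm' : ℝ → ℝ, ConeInput τ s fp fp' ∧ ConeInput τ s fm fm' ∧
      (∀ i, fp (ξ i) = fm (ξ i)) ∧
      ∃ x ∈ Icc (0:ℝ) 1, s * (τ - 2) / (16 * τ * ((n : ℝ) + 1) ^ 2) ≤ |fp x - fm x| := by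
  obtain ⟨k, hk, hgap⟩ := exists_forall_notMem_Ioo_div n ξ
  generalize hN_def : (n : ℝ) + 1 = N at hgap ⊢
  set r : ℝ := 1 / (2 * π * N) with hr_def
  have hN : 0 < N := hN_def ▸ by positivity
  have hr : 0 < r := by positivity
  have hτ₀ : 0 < τ := by linarith
  have hc₁ : 0 < s * (τ - 2) / τ := div_pos (mul_pos hs (by linarith)) hτ₀
  have hcell : k / N + 2 * π * r = (k + 1) / N := by
    rw [hr_def]
    field_simp
  have hb : k / N + 2 * π * r ≤ 1 := by
    rw [hcell, div_le_one hN]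
    linarith [(Nat.cast_le.2 hk : (k : ℝ) ≤ n)]
  have hlip : 2 * |s / τ| + |s * (τ - 2) / τ| ≤ s := by
    rw [abs_of_pos (by positivity), abs_of_pos hc₁]
    apply le_of_eq
    field_simp
    ring
  have hcone : s ≤ τ * |s / τ| := by
    rw [abs_of_pos (by positivity), mul_div_cancel₀ s hτ₀.ne']
  refine ⟨_, _, _, _,
    coneInput_quadratic_add_bump hτ₀.le hr (by positivity) hb hlip hcone,
    coneInput_quadratic_add_bump hτ₀.le hr (by positivity) hb (by rwa [abs_neg]) hcone,
    fun i => ?_, k / N + π * r, ⟨by positivity, by nlinarith [pi_pos]⟩, ?_⟩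
  · simp [bump_eq_zero_of_notMem_Ioo hr (hcell ▸ hgap i)]
  · have hdiff : 4 * (s * (τ - 2) / τ) * r ^ 2 = s * (τ - 2) / (τ * N ^ 2) / π ^ 2 := by
      rw [hr_def]
      field_simp
      ring
    have hpi : π ^ 2 ≤ 16 := by nlinarith [pi_lt_four, pi_pos]
    have hpos : 0 < 4 * (s * (τ - 2) / τ) * r ^ 2 := by positivity
    calc s * (τ - 2) / (16 * τ * N ^ 2) = s * (τ - 2) / (τ * N ^ 2) / 16 := by ring
      _ ≤ s * (τ - 2) / (τ * N ^ 2) / π ^ 2 :=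
        div_le_div_of_nonneg_left (div_pos (mul_pos hs (by linarith)) (by positivity)).le
          (by positivity) hpi
      _ = |_| := by
        rw [bump_peak hr, ← hdiff, ← abs_of_pos hpos]
        congr 1
        ring

theorem le_abs_sub_or_le_abs_sub_of_two_mul_le {u v w ε : ℝ} (h : 2 * ε ≤ |u - v|) :
    ε ≤ |u - w| ∨ ε ≤ |v - w| := by
  by_contra! h'
  linarith [abs_sub_le u w v, abs_sub_comm w v]

theorem lower_bound_cone_recovery_general
    (τ s : ℝ) (hτ : 2 < τ) (hs : 0 < s)
    (n : ℕ) (ξ : Fin n → ℝ) :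
    (∃ fp fp' fm fm' : ℝ → ℝ,
      (∀ x ∈ Icc (0:ℝ) 1, HasDerivWithinAt fp (fp' x) (Icc 0 1) x) ∧
      (∀ x ∈ Icc (0:ℝ) 1, HasDerivWithinAt fm (fm' x) (Icc 0 1) x) ∧
      ContinuousOn fp' (Icc 0 1) ∧ ContinuousOn fm' (Icc 0 1) ∧
      LipschitzOnWith (Real.toNNReal s) fp' (Icc 0 1) ∧
      LipschitzOnWith (Real.toNNReal s) fm' (Icc 0 1) ∧
      LipschitzOnWith
        (Real.toNNReal (τ * ⨆ x : Icc (0:ℝ) 1, |fp' x.1 - (fp 1 - fp 0)|))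
        fp' (Icc 0 1) ∧
      LipschitzOnWith
        (Real.toNNReal (τ * ⨆ x : Icc (0:ℝ) 1, |fm' x.1 - (fm 1 - fm 0)|))
        fm' (Icc 0 1) ∧
      (∀ i, fp (ξ i) = fm (ξ i)) ∧
      (∃ x ∈ Icc (0:ℝ) 1,
        s * (τ - 2) / (16 * τ * ((n : ℝ) + 1) ^ 2) ≤ |fp x - fm x|)) ∧
    (∀ A : (Fin n → ℝ) → (ℝ → ℝ), ∃ f f' : ℝ → ℝ,
      (∀ x ∈ Icc (0:ℝ) 1, HasDerivWithinAt f (f' x) (Icc 0 1) x) ∧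
      LipschitzOnWith (Real.toNNReal s) f' (Icc 0 1) ∧
      LipschitzOnWith
        (Real.toNNReal (τ * ⨆ x : Icc (0:ℝ) 1, |f' x.1 - (f 1 - f 0)|))
        f' (Icc 0 1) ∧
      ∃ x ∈ Icc (0:ℝ) 1,
        s * (τ - 2) / (32 * τ * ((n : ℝ) + 1) ^ 2)
          ≤ |f x - A (fun i => f (ξ i)) x|) := by
  obtain ⟨fp, fp', fm, fm', hp, hm, hdata, x, hx, hgap⟩ := exists_fooling_pair hτ hs ξ
  refine ⟨⟨fp, fp', fm, fm', hp.hasDerivWithinAt, hm.hasDerivWithinAt,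
    hp.lipschitzOnWith.continuousOn, hm.lipschitzOnWith.continuousOn, hp.lipschitzOnWith,
    hm.lipschitzOnWith, hp.lipschitzOnWith_cone, hm.lipschitzOnWith_cone, hdata, x, hx, hgap⟩,
    fun A => ?_⟩
  have hhalf : 2 * (s * (τ - 2) / (32 * τ * ((n : ℝ) + 1) ^ 2)) ≤ |fp x - fm x| := by
    convert hgap using 1
    generalize ((n : ℝ) + 1) ^ 2 = M
    ring
  have hsame : (fun i => fm (ξ i)) = fun i => fp (ξ i) := funext fun i => (hdata i).symm
  rcases le_abs_sub_or_le_abs_sub_of_two_mul_le hhalf (w := A (fun i => fp (ξ i)) x) with h | h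
  · exact ⟨fp, fp', hp.hasDerivWithinAt, hp.lipschitzOnWith, hp.lipschitzOnWith_cone, x, hx, h⟩
  · exact ⟨fm, fm', hm.hasDerivWithinAt, hm.lipschitzOnWith, hm.lipschitzOnWith_cone, x, hx,
      hsame ▸ h⟩

/-- Fooling-pair construction for the lower complexity bound for `L∞` recovery on the
cone `C_τ = {f : ‖f″‖_∞ ≤ τ ‖f′ − f(1) + f(0)‖_∞}` (with the Lipschitz constant of `f′`
playing the role of `‖f″‖_∞`), together with its consequence: any deterministic
algorithm using only the data `f(ξ_1),…,f(ξ_n)` errs in the sup norm by at least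
`s(τ−2)/(32τ(n+1)²)` on some `f ∈ C_τ` with `‖f″‖_∞ ≤ s`. -/
theorem lower_bound_cone_recovery
    (τ s : ℝ) (hτ : 2 < τ) (hs : 0 < s)
    (n : ℕ) (ξ : Fin n → ℝ) (hξ : ∀ i, ξ i ∈ Icc (0:ℝ) 1) :
    (∃ fp fp' fm fm' : ℝ → ℝ,
      (∀ x ∈ Icc (0:ℝ) 1, HasDerivWithinAt fp (fp' x) (Icc 0 1) x) ∧
      (∀ x ∈ Icc (0:ℝ) 1, HasDerivWithinAt fm (fm' x) (Icc 0 1) x) ∧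
      ContinuousOn fp' (Icc 0 1) ∧ ContinuousOn fm' (Icc 0 1) ∧
      LipschitzOnWith (Real.toNNReal s) fp' (Icc 0 1) ∧
      LipschitzOnWith (Real.toNNReal s) fm' (Icc 0 1) ∧
      LipschitzOnWith
        (Real.toNNReal (τ * ⨆ x : Icc (0:ℝ) 1, |fp' x.1 - (fp 1 - fp 0)|))
        fp' (Icc 0 1) ∧
      LipschitzOnWith
        (Real.toNNReal (τ * ⨆ x : Icc (0:ℝ) 1, |fm' x.1 - (fm 1 - fm 0)|))
        fm' (Icc 0 1) ∧
      (∀ i, fp (ξ i) = fm (ξ i)) ∧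
      (∃ x ∈ Icc (0:ℝ) 1,
        s * (τ - 2) / (16 * τ * ((n : ℝ) + 1) ^ 2) ≤ |fp x - fm x|)) ∧
    (∀ A : (Fin n → ℝ) → (ℝ → ℝ), ∃ f f' : ℝ → ℝ,
      (∀ x ∈ Icc (0:ℝ) 1, HasDerivWithinAt f (f' x) (Icc 0 1) x) ∧
      LipschitzOnWith (Real.toNNReal s) f' (Icc 0 1) ∧
      LipschitzOnWith
        (Real.toNNReal (τ * ⨆ x : Icc (0:ℝ) 1, |f' x.1 - (f 1 - f 0)|))
        f' (Icc 0 1) ∧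
      ∃ x ∈ Icc (0:ℝ) 1,
        s * (τ - 2) / (32 * τ * ((n : ℝ) + 1) ^ 2)
          ≤ |f x - A (fun i => f (ξ i)) x|) :=
  lower_bound_cone_recovery_general τ s hτ hs n ξ
end

section
/- Let V be a real vector space, let p and q be seminorms on V, and let τ > 0. Suppose there exist f_in, f_out ∈ V with q(f_in) > 0 and q(f_out) > 0 such that p(f_in) < τ·q(f_in) and p(f_out) > τ·q(f_out). Then the cone C_τ = {f ∈ V : p(f) ≤ τ·q(f)} is not a convex set. Specifically, writing τ_in = p(f_in)/q(f_in) and τ_out = p(f_out)/q(f_out), the functions f_± = (τ − τ_in)·q(f_in)·f_out ± (τ + τ_out)·q(f_out)·f_in both lie in C_τ, but their midpoint (f₊ + f₋)/2 = (τ − τ_in)·q(f_in)·f_out is a nonzero multiple of f_out and lies outside C_τ. -/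
/-!
With `a = τ q(f_in) − p(f_in) > 0` and `b = τ q(f_out) + p(f_out) > 0` one has the identity
`a p(f_out) + b p(f_in) = τ (b q(f_in) − a q(f_out))`. By the triangle inequality for `p` and the
reverse triangle inequality for `q`, this puts both `a f_out ± b f_in` in the cone, while their
midpoint `a f_out` inherits `p > τ q` from `f_out`.
-/

namespace Seminorm

variable {V : Type*} [AddCommGroup V] [Module ℝ V]

lemma map_smul_of_nonneg (p : Seminorm ℝ V) {c : ℝ} (hc : 0 ≤ c) (v : V) :
    p (c • v) = c * p v := by
  rw [map_smul_eq_mul, Real.norm_of_nonneg hc]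

lemma sub_le_map_add (q : Seminorm ℝ V) (u v : V) : q v - q u ≤ q (u + v) := by
  have h := map_sub_le_add q (u + v) u
  rw [add_sub_cancel_left] at h
  linarith

lemma map_add_le_mul_map_add (p q : Seminorm ℝ V) {τ : ℝ} (hτ : 0 ≤ τ) {u v : V}
    (h : p u + p v ≤ τ * (q v - q u)) : p (u + v) ≤ τ * q (u + v) :=
  calc p (u + v) ≤ p u + p v := map_add_le_add p u v
    _ ≤ τ * (q v - q u) := h
    _ ≤ τ * q (u + v) := mul_le_mul_of_nonneg_left (q.sub_le_map_add u v) hτ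

lemma map_sub_le_mul_map_sub (p q : Seminorm ℝ V) {τ : ℝ} (hτ : 0 ≤ τ) {u v : V}
    (h : p u + p v ≤ τ * (q v - q u)) : p (u - v) ≤ τ * q (u - v) := by
  rw [sub_eq_add_neg]
  exact map_add_le_mul_map_add p q hτ (by rwa [map_neg_eq_map, map_neg_eq_map])

end Seminorm

lemma not_convex_of_midpoint_notMem {V : Type*} [AddCommGroup V] [Module ℝ V] {s : Set V}
    {x y : V} (hx : x ∈ s) (hy : y ∈ s) (hmid : (1 / 2 : ℝ) • (x + y) ∉ s) :
    ¬ Convex ℝ s := fun hs ↦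
  hmid (by simpa only [smul_add] using hs hx hy (by norm_num) (by norm_num) (add_halves 1))

theorem cone_not_convex_general
    {V : Type*} [AddCommGroup V] [Module ℝ V]
    (p q : Seminorm ℝ V) (τ : ℝ)
    (fin fout : V) (hqin : 0 < q fin) (hqout : 0 < q fout)
    (hin : p fin < τ * q fin) (hout : τ * q fout < p fout) :
    (p (((τ - p fin / q fin) * q fin) • fout + ((τ + p fout / q fout) * q fout) • fin)
        ≤ τ * q (((τ - p fin / q fin) * q fin) • fout
              + ((τ + p fout / q fout) * q fout) • fin)) ∧
    (p (((τ - p fin / q fin) * q fin) • fout - ((τ + p fout / q fout) * q fout) • fin)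
        ≤ τ * q (((τ - p fin / q fin) * q fin) • fout
              - ((τ + p fout / q fout) * q fout) • fin)) ∧
    ((1 / 2 : ℝ) • ((((τ - p fin / q fin) * q fin) • fout
            + ((τ + p fout / q fout) * q fout) • fin)
          + (((τ - p fin / q fin) * q fin) • fout
            - ((τ + p fout / q fout) * q fout) • fin))
      = ((τ - p fin / q fin) * q fin) • fout) ∧
    (((τ - p fin / q fin) * q fin) • fout ≠ 0) ∧
    ¬ (p (((τ - p fin / q fin) * q fin) • fout)
        ≤ τ * q (((τ - p fin / q fin) * q fin) • fout)) ∧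
    ¬ Convex ℝ {f : V | p f ≤ τ * q f} := by
  set a := (τ - p fin / q fin) * q fin with ha
  set b := (τ + p fout / q fout) * q fout with hb
  rw [sub_mul, div_mul_cancel₀ _ hqin.ne'] at ha
  rw [add_mul, div_mul_cancel₀ _ hqout.ne'] at hb
  have hτ : 0 < τ := pos_of_mul_pos_left ((apply_nonneg p fin).trans_lt hin) hqin.le
  have ha0 : 0 < a := by linarith
  have hb0 : 0 < b := by linarith [apply_nonneg p fout, mul_pos hτ hqout]
  have hkey : p (a • fout) + p (b • fin) ≤ τ * (q (b • fin) - q (a • fout)) := by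
    simp only [p.map_smul_of_nonneg, q.map_smul_of_nonneg, ha0.le, hb0.le]
    exact le_of_eq (by rw [ha, hb]; ring)
  have hplus := p.map_add_le_mul_map_add q hτ.le hkey
  have hminus := p.map_sub_le_mul_map_sub q hτ.le hkey
  have hmid : (1 / 2 : ℝ) • ((a • fout + b • fin) + (a • fout - b • fin)) = a • fout := by
    module
  have hmid_notMem : ¬ p (a • fout) ≤ τ * q (a • fout) := by
    rw [p.map_smul_of_nonneg ha0.le, q.map_smul_of_nonneg ha0.le, not_le, mul_left_comm]
    exact mul_lt_mul_of_pos_left hout ha0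
  have hne : a • fout ≠ 0 := fun h ↦ hmid_notMem (by simp [h])
  refine ⟨hplus, hminus, hmid, hne, hmid_notMem, ?_⟩
  exact not_convex_of_midpoint_notMem hplus hminus (by rwa [hmid])

/-- The cone `C_τ = {f : p(f) ≤ τ q(f)}` (with `p` the strong and `q` the weak seminorm)
is not convex: if `f_in` lies strictly inside the cone and `f_out` strictly outside
(both with nonzero weak seminorm), then the two functions
`f_± = (τ − τ_in) q(f_in) f_out ± (τ + τ_out) q(f_out) f_in` lie in the cone, while
their midpoint, the nonzero multiple `(τ − τ_in) q(f_in) f_out` of `f_out`, does not. -/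
theorem cone_not_convex
    {V : Type*} [AddCommGroup V] [Module ℝ V]
    (p q : Seminorm ℝ V) (τ : ℝ) (hτ : 0 < τ)
    (fin fout : V) (hqin : 0 < q fin) (hqout : 0 < q fout)
    (hin : p fin < τ * q fin) (hout : τ * q fout < p fout) :
    (p (((τ - p fin / q fin) * q fin) • fout + ((τ + p fout / q fout) * q fout) • fin)
        ≤ τ * q (((τ - p fin / q fin) * q fin) • fout
              + ((τ + p fout / q fout) * q fout) • fin)) ∧
    (p (((τ - p fin / q fin) * q fin) • fout - ((τ + p fout / q fout) * q fout) • fin)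
        ≤ τ * q (((τ - p fin / q fin) * q fin) • fout
              - ((τ + p fout / q fout) * q fout) • fin)) ∧
    ((1 / 2 : ℝ) • ((((τ - p fin / q fin) * q fin) • fout
            + ((τ + p fout / q fout) * q fout) • fin)
          + (((τ - p fin / q fin) * q fin) • fout
            - ((τ + p fout / q fout) * q fout) • fin))
      = ((τ - p fin / q fin) * q fin) • fout) ∧
    (((τ - p fin / q fin) * q fin) • fout ≠ 0) ∧
    ¬ (p (((τ - p fin / q fin) * q fin) • fout)
        ≤ τ * q (((τ - p fin / q fin) * q fin) • fout)) ∧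
    ¬ Convex ℝ {f : V | p f ≤ τ * q f} :=
  cone_not_convex_general p q τ fin fout hqin hqout hin hout
end
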